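/- Let (B,L) be a regular Hadamard pair. If C_1 and C_2 are two distinct B-extreme L-cycles, then the subspaces H(C_1) and H(C_2) of L²(μ_B) are orthogonal. -/

import Mathlib

open MeasureTheory Complex Filter Topology

noncomputable section

def expv {d : ℕ} (t x : Fin d → ℝ) : ℂ :=
  Complex.exp (2 * Real.pi * Complex.I * (∑ i, t i * x i))

def Rmat {d : ℕ} (R : Matrix (Fin d) (Fin d) ℤ) : Matrix (Fin d) (Fin d) ℝ :=
  R.map Int.cast

def vecR {d : ℕ} (b : Fin d → ℤ) : Fin d → ℝ := fun i => (b i : ℝ)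

def tauB {d : ℕ} (R : Matrix (Fin d) (Fin d) ℤ) (b : Fin d → ℤ) (x : Fin d → ℝ) :
    Fin d → ℝ :=
  (Rmat R)⁻¹.mulVec (x + vecR b)

def tauL {d : ℕ} (R : Matrix (Fin d) (Fin d) ℤ) (l : Fin d → ℤ) (x : Fin d → ℝ) :
    Fin d → ℝ :=
  ((Rmat R).transpose)⁻¹.mulVec (x + vecR l)

/-- `σ_l(x) = Rᵀ x + l`. -/
def sigmaL {d : ℕ} (R : Matrix (Fin d) (Fin d) ℤ) (l : Fin d → ℤ) (x : Fin d → ℝ) :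
    Fin d → ℝ :=
  (Rmat R).transpose.mulVec x + vecR l

def Expansive {d : ℕ} (R : Matrix (Fin d) (Fin d) ℤ) : Prop :=
  ∀ z : ℂ, (R.map (Int.cast : ℤ → ℂ)).charpoly.IsRoot z → 1 < ‖z‖

def chiB {d : ℕ} (B : Finset (Fin d → ℤ)) (x : Fin d → ℝ) : ℂ :=
  (B.card : ℂ)⁻¹ * ∑ b ∈ B, expv (vecR b) x

def hadMat {d : ℕ} (R : Matrix (Fin d) (Fin d) ℤ) (B L : Finset (Fin d → ℤ)) :
    Matrix B L ℂ :=
  fun b l => ((Real.sqrt (B.card) : ℝ) : ℂ)⁻¹ *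
    expv ((Rmat R)⁻¹.mulVec (vecR (b : Fin d → ℤ))) (vecR (l : Fin d → ℤ))

def IsHadamardPair {d : ℕ} (R : Matrix (Fin d) (Fin d) ℤ)
    (B L : Finset (Fin d → ℤ)) : Prop :=
  (hadMat R B L).conjTranspose * hadMat R B L = 1 ∧
    hadMat R B L * (hadMat R B L).conjTranspose = 1

/-- A (finite) `L`-cycle: distinct points `x_0, …, x_p` with
`τ_{l_i} x_i = x_{i+1 (mod p+1)}` for some digits `l_i ∈ L`. -/
def IsLCycle {d : ℕ} (R : Matrix (Fin d) (Fin d) ℤ) (L : Finset (Fin d → ℤ))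
    (C : Set (Fin d → ℝ)) : Prop :=
  ∃ p : ℕ, ∃ x : Fin (p + 1) → (Fin d → ℝ), ∃ l : Fin (p + 1) → (Fin d → ℤ),
    Function.Injective x ∧ (∀ i, l i ∈ L) ∧
    (∀ i, tauL R (l i) (x i) = x (i + 1)) ∧ C = Set.range x

/-- A `B`-extreme set: `|χ_B(x)| = 1` for all `x ∈ C`. -/
def BExtreme {d : ℕ} (B : Finset (Fin d → ℤ)) (C : Set (Fin d → ℝ)) : Prop :=
  ∀ x ∈ C, ‖chiB B x‖ = 1

/-- `Γ(B) = {∑_{k=0}^n R^k b_k : b_k ∈ B}` (viewed inside `ℝ^d`). -/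
def GammaBSet {d : ℕ} (R : Matrix (Fin d) (Fin d) ℤ) (B : Finset (Fin d → ℤ)) :
    Set (Fin d → ℝ) :=
  {y | ∃ n : ℕ, ∃ bs : Fin (n + 1) → (Fin d → ℤ), (∀ k, bs k ∈ B) ∧
    y = ∑ k : Fin (n + 1), ((Rmat R) ^ (k : ℕ)).mulVec (vecR (bs k))}

/-- `Λ(C)`: the smallest subset of `ℝ^d` containing `-C` and invariant under all
`σ_l`, `l ∈ L`. -/
def LambdaC {d : ℕ} (R : Matrix (Fin d) (Fin d) ℤ) (L : Finset (Fin d → ℤ))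
    (C : Set (Fin d → ℝ)) : Set (Fin d → ℝ) :=
  ⋂₀ {Λ : Set (Fin d → ℝ) | (∀ c ∈ C, -c ∈ Λ) ∧
    ∀ l ∈ L, ∀ x ∈ Λ, sigmaL R l x ∈ Λ}

/-- `H(C)`: the closed span of the exponentials `e_λ`, `λ ∈ Λ(C)`. -/
def HCyc {d : ℕ} {μ : Measure (Fin d → ℝ)} (E : (Fin d → ℝ) → Lp ℂ 2 μ)
    (R : Matrix (Fin d) (Fin d) ℤ) (L : Finset (Fin d → ℤ))
    (C : Set (Fin d → ℝ)) : Submodule ℂ (Lp ℂ 2 μ) :=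
  (Submodule.span ℂ {g : Lp ℂ 2 μ | ∃ lam ∈ LambdaC R L C, g = E lam}).topologicalClosure

/-!
The inner product `⟪e_λ₁, e_λ₂⟫` is the Fourier transform `μ̂(λ₂ - λ₁)`, and self-similarity of
`μ` gives `μ̂(Rᵀ s) = χ_B(s) μ̂(s)`. Every point of `Λ(C)` has a backward orbit under the maps `σ_l`
that eventually runs periodically through `-C`. Compare the backward orbits of `λ₁ ∈ Λ(C₁)` and
`λ₂ ∈ Λ(C₂)` digit by digit. At the first digit where they differ, the functional equation
produces the factor `χ_B(R⁻ᵀ(l' - l))`, which vanishes for a Hadamard pair; `B`-extremality of the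
cycles makes the remaining difference of the orbits `B`-integral, so it does not change `χ_B`. If
all digits agree, the difference of the orbits is multiplied by `Rᵀ` at each step while being
eventually periodic, so expansiveness forces it to vanish: the periodic tails, and hence `C₁` and
`C₂`, coincide.
-/

open scoped Matrix ENNReal Fin.NatCast Fin.CommRing

lemma eq_of_norm_average_eq_one {ι V : Type*} [NormedAddCommGroup V] [NormedSpace ℝ V]
    [StrictConvexSpace ℝ V] {t : Finset ι} {z : ι → V} (hz : ∀ i ∈ t, ‖z i‖ ≤ 1)
    (h : ‖(t.card : ℝ)⁻¹ • ∑ i ∈ t, z i‖ = 1) {i j : ι} (hi : i ∈ t) (hj : j ∈ t) :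
    z i = z j := by
  by_contra hij
  have hcard : (t.card : ℝ)⁻¹ ≠ 0 :=
    inv_ne_zero (Nat.cast_ne_zero.mpr (Finset.card_ne_zero_of_mem hi))
  have hlt := norm_sum_lt_of_strictConvexSpace (w := fun _ => (t.card : ℝ)⁻¹)
    (fun _ _ => by positivity) (by simp [Finset.card_ne_zero_of_mem hi]) hi hj hij hcard hcard hz
  rw [← Finset.smul_sum, h] at hlt
  exact lt_irrefl _ hlt

lemma Submodule.IsOrtho.topologicalClosure {𝕜 F : Type*} [RCLike 𝕜] [NormedAddCommGroup F]
    [InnerProductSpace 𝕜 F] {U V : Submodule 𝕜 F} (h : U ⟂ V) :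
    U.topologicalClosure ⟂ V.topologicalClosure := by
  rw [Submodule.isOrtho_iff_le, Submodule.orthogonal_closure]
  exact U.topologicalClosure_minimal (Submodule.isOrtho_iff_le.1 h) V.isClosed_orthogonal

section Exponentials

variable {d : ℕ}

lemma expv_eq (t x : Fin d → ℝ) :
    expv t x = Complex.exp (2 * Real.pi * Complex.I * ((t ⬝ᵥ x : ℝ) : ℂ)) := by
  simp [expv, dotProduct]

lemma continuous_expv (t : Fin d → ℝ) : Continuous (expv t) := by
  unfold expv; fun_prop

lemma norm_expv (t x : Fin d → ℝ) : ‖expv t x‖ = 1 := by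
  rw [expv_eq, Complex.norm_exp]
  simp

lemma expv_comm (t x : Fin d → ℝ) : expv t x = expv x t := by
  rw [expv_eq, expv_eq, dotProduct_comm]

lemma expv_add_left (t s x : Fin d → ℝ) : expv (t + s) x = expv t x * expv s x := by
  rw [expv_eq, expv_eq, expv_eq, ← Complex.exp_add, add_dotProduct]
  push_cast
  ring_nf

lemma expv_add_right (t x y : Fin d → ℝ) : expv t (x + y) = expv t x * expv t y := by
  rw [expv_comm, expv_add_left, expv_comm x, expv_comm y]

lemma conj_expv (t x : Fin d → ℝ) : starRingEnd ℂ (expv t x) = expv (-t) x := by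
  rw [expv_eq, expv_eq, ← Complex.exp_conj, neg_dotProduct]
  simp only [map_mul, Complex.conj_I, Complex.conj_ofReal, map_ofNat]
  push_cast
  ring_nf

lemma expv_mulVec_left (A : Matrix (Fin d) (Fin d) ℝ) (t x : Fin d → ℝ) :
    expv (A *ᵥ t) x = expv t (Aᵀ *ᵥ x) := by
  rw [expv_eq, expv_eq, Matrix.mulVec_transpose, dotProduct_comm, Matrix.dotProduct_mulVec,
    dotProduct_comm]

lemma expv_vecR_vecR (b m : Fin d → ℤ) : expv (vecR b) (vecR m) = 1 := by
  have : (vecR b ⬝ᵥ vecR m : ℝ) = ((b ⬝ᵥ m : ℤ) : ℝ) := by simp [dotProduct, vecR]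
  rw [expv_eq, this, ← Complex.exp_int_mul_two_pi_mul_I (b ⬝ᵥ m)]
  push_cast
  ring_nf

lemma expv_zero_right (t : Fin d → ℝ) : expv t 0 = 1 := by
  simp [expv_eq]

lemma expv_neg_right (t x : Fin d → ℝ) : expv t (-x) = starRingEnd ℂ (expv t x) := by
  rw [conj_expv, expv_eq, expv_eq, dotProduct_neg, neg_dotProduct]

end Exponentials

section Expansive

variable {d : ℕ} {R : Matrix (Fin d) (Fin d) ℤ}

lemma map_one_sub_transpose_pow {K : Type*} [Ring K] (R : Matrix (Fin d) (Fin d) ℤ) (m : ℕ) :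
    (1 - Rᵀ ^ m).map (Int.cast : ℤ → K) = 1 - (R.map Int.cast)ᵀ ^ m := by
  rw [← Matrix.transpose_map]
  exact (map_sub (Int.castRingHom K).mapMatrix _ _).trans (by rw [map_one, map_pow]; rfl)

lemma Expansive.one_lt_norm_of_mem_spectrum (hR : Expansive R) {z : ℂ}
    (hz : z ∈ spectrum ℂ (R.map (Int.cast : ℤ → ℂ))ᵀ) : 1 < ‖z‖ :=
  hR z (by rwa [Matrix.mem_spectrum_iff_isRoot_charpoly, Matrix.charpoly_transpose] at hz)

lemma Expansive.det_ne_zero (hR : Expansive R) : R.det ≠ 0 := by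
  have hunit : IsUnit (R.map (Int.cast : ℤ → ℂ))ᵀ :=
    (spectrum.zero_notMem_iff ℂ).mp fun h =>
      absurd (hR.one_lt_norm_of_mem_spectrum h) (by norm_num)
  rw [Matrix.isUnit_iff_isUnit_det, Matrix.det_transpose, ← Int.cast_det, isUnit_iff_ne_zero]
    at hunit
  exact_mod_cast hunit

lemma Expansive.det_one_sub_pow_ne_zero (hR : Expansive R) {m : ℕ} (hm : 0 < m) :
    (1 - Rᵀ ^ m).det ≠ 0 := by
  intro h
  have hone : (1 : ℂ) ∈ spectrum ℂ ((R.map (Int.cast : ℤ → ℂ))ᵀ ^ m) := by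
    rw [spectrum.mem_iff, map_one, ← map_one_sub_transpose_pow, Matrix.isUnit_iff_isUnit_det,
      ← Int.cast_det, h]
    simp
  rw [spectrum.map_pow_of_pos _ hm] at hone
  obtain ⟨z, hz, hzm⟩ := hone
  have := one_lt_pow₀ (hR.one_lt_norm_of_mem_spectrum hz) hm.ne'
  rw [← norm_pow, show z ^ m = 1 from hzm, norm_one] at this
  exact lt_irrefl _ this

end Expansive

section RealMatrix

variable {d : ℕ} {R : Matrix (Fin d) (Fin d) ℤ}

lemma Rmat_transpose_pow (R : Matrix (Fin d) (Fin d) ℤ) (k : ℕ) :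
    (Rmat R)ᵀ ^ k = (Rᵀ ^ k).map (Int.cast : ℤ → ℝ) := by
  rw [Rmat, ← Matrix.transpose_map]
  exact (map_pow (Int.castRingHom ℝ).mapMatrix Rᵀ k).symm

lemma Rmat_transpose_pow_mulVec_vecR (R : Matrix (Fin d) (Fin d) ℤ) (k : ℕ) (m : Fin d → ℤ) :
    (Rmat R)ᵀ ^ k *ᵥ vecR m = vecR (Rᵀ ^ k *ᵥ m) := by
  rw [Rmat_transpose_pow]
  funext i
  simp [vecR, Matrix.mulVec, dotProduct]

lemma Expansive.det_Rmat_ne_zero (hR : Expansive R) : (Rmat R).det ≠ 0 := by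
  rw [Rmat, ← Int.cast_det]
  exact_mod_cast hR.det_ne_zero

lemma Expansive.eq_zero_of_pow_mulVec_eq_self (hR : Expansive R) {m : ℕ} (hm : 0 < m)
    {v : Fin d → ℝ} (hv : (Rmat R)ᵀ ^ m *ᵥ v = v) : v = 0 := by
  have hdet : (1 - (Rmat R)ᵀ ^ m).det ≠ 0 := by
    rw [Rmat, ← map_one_sub_transpose_pow, ← Int.cast_det]
    exact_mod_cast hR.det_one_sub_pow_ne_zero hm
  exact Matrix.eq_zero_of_mulVec_eq_zero hdet
    (by rw [Matrix.sub_mulVec, hv, Matrix.one_mulVec, sub_self])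

end RealMatrix

section Fourier

variable {d : ℕ} {R : Matrix (Fin d) (Fin d) ℤ} {B : Finset (Fin d → ℤ)}

def fourierStieltjes (μ : Measure (Fin d → ℝ)) (t : Fin d → ℝ) : ℂ :=
  ∫ x, expv t x ∂μ

lemma inner_eq_fourierStieltjes {μ : Measure (Fin d → ℝ)} {E : (Fin d → ℝ) → Lp ℂ 2 μ}
    (hE : ∀ t : Fin d → ℝ, (E t : (Fin d → ℝ) → ℂ) =ᵐ[μ] fun x => expv t x) (u v : Fin d → ℝ) :
    inner ℂ (E u) (E v) = fourierStieltjes μ (v - u) := by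
  rw [MeasureTheory.L2.inner_def, fourierStieltjes]
  refine integral_congr_ae ?_
  filter_upwards [hE u, hE v] with x hu hv
  rw [hu, hv, RCLike.inner_apply, conj_expv, ← expv_add_left, ← sub_eq_add_neg]

lemma expv_transpose_mulVec_tauB (hR : (Rmat R).det ≠ 0) (b : Fin d → ℤ) (s x : Fin d → ℝ) :
    expv ((Rmat R)ᵀ *ᵥ s) (tauB R b x) = expv (vecR b) s * expv s x := by
  rw [expv_mulVec_left, Matrix.transpose_transpose, tauB, Matrix.mulVec_mulVec,
    Matrix.mul_nonsing_inv _ hR.isUnit, Matrix.one_mulVec, expv_add_right, expv_comm s (vecR b),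
    mul_comm]

lemma fourierStieltjes_transpose_mulVec {μ : Measure (Fin d → ℝ)} [IsFiniteMeasure μ]
    (hR : (Rmat R).det ≠ 0) (hμ : μ = (B.card : ℝ≥0∞)⁻¹ • ∑ b ∈ B, μ.map (tauB R b))
    (s : Fin d → ℝ) :
    fourierStieltjes μ ((Rmat R)ᵀ *ᵥ s) = chiB B s * fourierStieltjes μ s := by
  have hτ (b : Fin d → ℤ) : AEMeasurable (tauB R b) μ :=
    (Continuous.matrix_mulVec continuous_const
      (continuous_id.add continuous_const)).measurable.aemeasurable
  have hint (b : Fin d → ℤ) : Integrable (expv ((Rmat R)ᵀ *ᵥ s)) (μ.map (tauB R b)) :=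
    (integrable_const (1 : ℝ)).mono' (continuous_expv _).aestronglyMeasurable
      (.of_forall fun x => (norm_expv _ x).le)
  calc fourierStieltjes μ ((Rmat R)ᵀ *ᵥ s)
      = ∫ x, expv ((Rmat R)ᵀ *ᵥ s) x ∂((B.card : ℝ≥0∞)⁻¹ • ∑ b ∈ B, μ.map (tauB R b)) := by
        rw [← hμ, fourierStieltjes]
    _ = (B.card : ℝ)⁻¹ • ∑ b ∈ B, expv (vecR b) s * fourierStieltjes μ s := by
        rw [integral_smul_measure, integral_finsetSum_measure fun b _ => hint b,
          ENNReal.toReal_inv, ENNReal.toReal_natCast]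
        congr 1
        refine Finset.sum_congr rfl fun b _ => ?_
        rw [integral_map (hτ b) (continuous_expv _).aestronglyMeasurable, fourierStieltjes,
          ← integral_const_mul]
        simp only [expv_transpose_mulVec_tauB hR]
    _ = chiB B s * fourierStieltjes μ s := by
        rw [chiB, ← Finset.sum_mul, Complex.real_smul]
        push_cast
        ring

end Fourier

section DigitDual

variable {d : ℕ} {R : Matrix (Fin d) (Fin d) ℤ} {B L : Finset (Fin d → ℤ)}

def digitDual (B : Finset (Fin d → ℤ)) : AddSubgroup (Fin d → ℝ) where
  carrier := {x | ∀ b ∈ B, expv (vecR b) x = 1}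
  zero_mem' _ _ := expv_zero_right _
  add_mem' hx hy b hb := by rw [expv_add_right, hx b hb, hy b hb, one_mul]
  neg_mem' hx b hb := by rw [expv_neg_right, hx b hb, map_one]

lemma vecR_mem_digitDual (m : Fin d → ℤ) : vecR m ∈ digitDual B :=
  fun b _ => expv_vecR_vecR b m

lemma chiB_eq_smul_sum (x : Fin d → ℝ) :
    chiB B x = (B.card : ℝ)⁻¹ • ∑ b ∈ B, expv (vecR b) x := by
  rw [chiB, Complex.real_smul]
  push_cast
  rfl

/-- A unit-modulus average of unimodular numbers forces them all to coincide, and the digit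
`0 ∈ B` pins the common value to `1`. -/
lemma mem_digitDual_of_norm_chiB (hB0 : (0 : Fin d → ℤ) ∈ B) {x : Fin d → ℝ}
    (hx : ‖chiB B x‖ = 1) : x ∈ digitDual B := by
  intro b hb
  rw [chiB_eq_smul_sum] at hx
  have h := eq_of_norm_average_eq_one (fun b _ => (norm_expv (vecR b) x).le) hx hb hB0
  rw [h, expv_comm, show vecR (0 : Fin d → ℤ) = 0 from funext fun _ => Int.cast_zero,
    expv_zero_right]

lemma chiB_add_of_mem_digitDual {u : Fin d → ℝ} (hu : u ∈ digitDual B) (y : Fin d → ℝ) :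
    chiB B (u + y) = chiB B y := by
  simp only [chiB, expv_add_right]
  congr 1
  exact Finset.sum_congr rfl fun b hb => by rw [hu b hb, one_mul]

lemma conjTranspose_hadMat_mul_apply (l l' : L) :
    ((hadMat R B L)ᴴ * hadMat R B L) l l' =
      chiB B ((Rmat R)ᵀ⁻¹ *ᵥ (vecR (l' : Fin d → ℤ) - vecR l)) := by
  have hsqrt : ((Real.sqrt B.card : ℝ) : ℂ)⁻¹ * ((Real.sqrt B.card : ℝ) : ℂ)⁻¹
      = (B.card : ℂ)⁻¹ := by
    rw [← mul_inv, ← Complex.ofReal_mul, Real.mul_self_sqrt (Nat.cast_nonneg _)]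
    push_cast
    rfl
  rw [Matrix.mul_apply, chiB, ← hsqrt, ← Finset.sum_coe_sort B, Finset.mul_sum]
  refine Finset.sum_congr rfl fun b _ => ?_
  have hphase : expv (-((Rmat R)⁻¹ *ᵥ vecR b)) (vecR l) * expv ((Rmat R)⁻¹ *ᵥ vecR b) (vecR l')
      = expv (vecR b) ((Rmat R)ᵀ⁻¹ *ᵥ (vecR (l' : Fin d → ℤ) - vecR l)) := by
    rw [expv_eq, expv_eq, expv_eq, ← Complex.exp_add, ← Matrix.transpose_nonsing_inv,
      Matrix.dotProduct_mulVec, Matrix.vecMul_transpose, dotProduct_sub, neg_dotProduct]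
    push_cast
    ring_nf
  rw [Matrix.conjTranspose_apply, hadMat, hadMat, star_mul', Complex.star_def, conj_expv,
    map_inv₀, Complex.conj_ofReal, ← hphase]
  ring

lemma IsHadamardPair.chiB_eq_zero (hHad : IsHadamardPair R B L) {l l' : Fin d → ℤ}
    (hl : l ∈ L) (hl' : l' ∈ L) (hne : l ≠ l') :
    chiB B ((Rmat R)ᵀ⁻¹ *ᵥ (vecR l' - vecR l)) = 0 := by
  have h := congrFun (congrFun hHad.1 ⟨l, hl⟩) ⟨l', hl'⟩
  rwa [conjTranspose_hadMat_mul_apply, Matrix.one_apply_ne fun h => hne (congrArg Subtype.val h)]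
    at h

end DigitDual

section Orbits

variable {d : ℕ} {R : Matrix (Fin d) (Fin d) ℤ} {B L : Finset (Fin d → ℤ)}

lemma lambdaC_subset {C Λ : Set (Fin d → ℝ)} (hC : ∀ c ∈ C, -c ∈ Λ)
    (hσ : ∀ l ∈ L, ∀ x ∈ Λ, sigmaL R l x ∈ Λ) : LambdaC R L C ⊆ Λ :=
  Set.sInter_subset_of_mem ⟨hC, hσ⟩

lemma neg_mem_lambdaC {C : Set (Fin d → ℝ)} {c : Fin d → ℝ} (hc : c ∈ C) :
    -c ∈ LambdaC R L C :=
  Set.mem_sInter.2 fun _ hΛ => hΛ.1 c hc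

lemma sigmaL_mem_lambdaC {C : Set (Fin d → ℝ)} {l : Fin d → ℤ} (hl : l ∈ L) {x : Fin d → ℝ}
    (hx : x ∈ LambdaC R L C) : sigmaL R l x ∈ LambdaC R L C :=
  Set.mem_sInter.2 fun Λ hΛ => hΛ.2 l hl x (Set.mem_sInter.1 hx Λ hΛ)

lemma IsLCycle.exists_transpose_mulVec {C : Set (Fin d → ℝ)} (hC : IsLCycle R L C)
    (hR : (Rmat R).det ≠ 0) :
    ∃ p, ∃ x : Fin (p + 1) → Fin d → ℝ, ∃ l : Fin (p + 1) → Fin d → ℤ, (∀ i, l i ∈ L) ∧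
      (∀ i, (Rmat R)ᵀ *ᵥ x (i + 1) = x i + vecR (l i)) ∧ C = Set.range x := by
  obtain ⟨p, x, l, -, hl, hτ, rfl⟩ := hC
  refine ⟨p, x, l, hl, fun i => ?_, rfl⟩
  rw [← hτ i, tauL, Matrix.mulVec_mulVec,
    Matrix.mul_nonsing_inv _ (by rwa [Matrix.det_transpose, isUnit_iff_ne_zero]),
    Matrix.one_mulVec]

def IsBackwardOrbit (R : Matrix (Fin d) (Fin d) ℤ) (L : Finset (Fin d → ℤ))
    (ν : ℕ → Fin d → ℝ) (a : ℕ → Fin d → ℤ) : Prop :=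
  ∀ k, a k ∈ L ∧ sigmaL R (a k) (ν (k + 1)) = ν k

lemma exists_backwardOrbit {p : ℕ} {x : Fin (p + 1) → Fin d → ℝ} {l : Fin (p + 1) → Fin d → ℤ}
    (hl : ∀ i, l i ∈ L) (hx : ∀ i, sigmaL R (l i) (-x (i + 1)) = -x i) {lam : Fin d → ℝ}
    (hlam : lam ∈ LambdaC R L (Set.range x)) :
    ∃ ν a, ν 0 = lam ∧ IsBackwardOrbit R L ν a ∧ (∀ k, ν k ∈ LambdaC R L (Set.range x)) ∧
      ∃ K i₀, ∀ k ≥ K, ν k = -x (i₀ + k) := by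
  refine lambdaC_subset (Λ := {lam | ∃ ν a, ν 0 = lam ∧ IsBackwardOrbit R L ν a ∧
    (∀ k, ν k ∈ LambdaC R L (Set.range x)) ∧ ∃ K i₀, ∀ k ≥ K, ν k = -x (i₀ + k)})
    ?_ ?_ hlam
  · rintro _ ⟨i, rfl⟩
    refine ⟨fun k => -x (i + k), fun k => l (i + k), by simp, fun k => ⟨hl _, ?_⟩,
      fun k => neg_mem_lambdaC ⟨_, rfl⟩, 0, i, fun k _ => rfl⟩
    change sigmaL R (l (i + k)) (-x (i + ((k + 1 : ℕ) : Fin (p + 1)))) = -x (i + k)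
    rw [Nat.cast_succ, ← add_assoc, hx]
  · rintro l' hl' _ ⟨ν, a, rfl, hν, hνΛ, K, i₀, hK⟩
    refine ⟨fun k => match k with | 0 => sigmaL R l' (ν 0) | k + 1 => ν k,
      fun k => match k with | 0 => l' | k + 1 => a k, rfl, ?_, ?_, K + 1, i₀ - 1, ?_⟩
    · rintro (_ | k)
      exacts [⟨hl', rfl⟩, hν k]
    · rintro (_ | k)
      exacts [sigmaL_mem_lambdaC hl' (hνΛ 0), hνΛ k]
    · rintro (_ | k) hk
      · omega
      · simp only [hK k (by omega), Nat.cast_succ, sub_add_add_cancel]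

end Orbits

section OrbitDual

variable {d : ℕ} {R : Matrix (Fin d) (Fin d) ℤ} {B L : Finset (Fin d → ℤ)}

def orbitDual (R : Matrix (Fin d) (Fin d) ℤ) (B : Finset (Fin d → ℤ)) :
    AddSubgroup (Fin d → ℝ) :=
  ⨅ k : ℕ, (digitDual B).comap ((Rmat R)ᵀ ^ k).mulVecLin.toAddMonoidHom

lemma mem_orbitDual_iff {x : Fin d → ℝ} :
    x ∈ orbitDual R B ↔ ∀ k : ℕ, (Rmat R)ᵀ ^ k *ᵥ x ∈ digitDual B := by
  simp [orbitDual, AddSubgroup.mem_iInf]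

lemma sigmaL_mem_orbitDual (l : Fin d → ℤ) {x : Fin d → ℝ} (hx : x ∈ orbitDual R B) :
    sigmaL R l x ∈ orbitDual R B := by
  rw [mem_orbitDual_iff] at hx ⊢
  intro k
  rw [sigmaL, Matrix.mulVec_add, Matrix.mulVec_mulVec, ← pow_succ,
    Rmat_transpose_pow_mulVec_vecR]
  exact add_mem (hx (k + 1)) (vecR_mem_digitDual _)

lemma mem_orbitDual_of_cycle {p : ℕ} {x : Fin (p + 1) → Fin d → ℝ} {l : Fin (p + 1) → Fin d → ℤ}
    (hcyc : ∀ i, (Rmat R)ᵀ *ᵥ x (i + 1) = x i + vecR (l i)) (hx : ∀ i, x i ∈ digitDual B)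
    (i : Fin (p + 1)) : x i ∈ orbitDual R B := by
  rw [mem_orbitDual_iff]
  intro k
  induction k generalizing i with
  | zero => simpa using hx i
  | succ k ih =>
    obtain ⟨j, rfl⟩ : ∃ j, i = j + 1 := ⟨i - 1, by ring⟩
    rw [pow_succ, ← Matrix.mulVec_mulVec, hcyc, Matrix.mulVec_add,
      Rmat_transpose_pow_mulVec_vecR]
    exact add_mem (ih j) (vecR_mem_digitDual _)

end OrbitDual

section Orthogonality

variable {d : ℕ} {R : Matrix (Fin d) (Fin d) ℤ} {B L : Finset (Fin d → ℤ)}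
  {μ : Measure (Fin d → ℝ)} [IsFiniteMeasure μ]

lemma sigmaL_sub_sigmaL (a a' : Fin d → ℤ) (y y' : Fin d → ℝ) :
    sigmaL R a' y' - sigmaL R a y = (Rmat R)ᵀ *ᵥ (y' - y) + (vecR a' - vecR a) := by
  rw [sigmaL, sigmaL, Matrix.mulVec_sub]
  abel

lemma fourierStieltjes_sigmaL_sub_sigmaL (hR : (Rmat R).det ≠ 0)
    (hμ : μ = (B.card : ℝ≥0∞)⁻¹ • ∑ b ∈ B, μ.map (tauB R b)) (a : Fin d → ℤ) (y y' : Fin d → ℝ) :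
    fourierStieltjes μ (sigmaL R a y' - sigmaL R a y)
      = chiB B (y' - y) * fourierStieltjes μ (y' - y) := by
  rw [sigmaL_sub_sigmaL, sub_self, add_zero, fourierStieltjes_transpose_mulVec hR hμ]

/-- After pulling out `Rᵀ`, the `χ_B`-factor only sees the digit difference, where it vanishes
by the Hadamard property. -/
lemma fourierStieltjes_sigmaL_sub_sigmaL_eq_zero (hR : (Rmat R).det ≠ 0)
    (hμ : μ = (B.card : ℝ≥0∞)⁻¹ • ∑ b ∈ B, μ.map (tauB R b)) (hHad : IsHadamardPair R B L)
    {a a' : Fin d → ℤ} (ha : a ∈ L) (ha' : a' ∈ L) (hne : a ≠ a') {y y' : Fin d → ℝ}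
    (hy : y' - y ∈ digitDual B) :
    fourierStieltjes μ (sigmaL R a' y' - sigmaL R a y) = 0 := by
  have hS : IsUnit ((Rmat R)ᵀ).det := by rwa [Matrix.det_transpose, isUnit_iff_ne_zero]
  have hsplit : sigmaL R a' y' - sigmaL R a y
      = (Rmat R)ᵀ *ᵥ ((y' - y) + (Rmat R)ᵀ⁻¹ *ᵥ (vecR a' - vecR a)) := by
    rw [sigmaL_sub_sigmaL, Matrix.mulVec_add, Matrix.mulVec_mulVec,
      Matrix.mul_nonsing_inv _ hS, Matrix.one_mulVec]
  rw [hsplit, fourierStieltjes_transpose_mulVec hR hμ, chiB_add_of_mem_digitDual hy,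
    hHad.chiB_eq_zero ha ha' hne, zero_mul]

lemma fourierStieltjes_sub_eq_zero_of_digit_ne (hR : (Rmat R).det ≠ 0)
    (hμ : μ = (B.card : ℝ≥0∞)⁻¹ • ∑ b ∈ B, μ.map (tauB R b)) (hHad : IsHadamardPair R B L)
    {ν ν' : ℕ → Fin d → ℝ} {a a' : ℕ → Fin d → ℤ} (hν : IsBackwardOrbit R L ν a)
    (hν' : IsBackwardOrbit R L ν' a') (hdual : ∀ k, ν' k - ν k ∈ digitDual B) {k : ℕ}
    (hk : a k ≠ a' k) : fourierStieltjes μ (ν' 0 - ν 0) = 0 := by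
  suffices h : ∀ n j, a (j + n) ≠ a' (j + n) → fourierStieltjes μ (ν' j - ν j) = 0 from
    h k 0 (by simpa using hk)
  intro n
  induction n with
  | zero =>
    intro j hj
    rw [← (hν j).2, ← (hν' j).2]
    exact fourierStieltjes_sigmaL_sub_sigmaL_eq_zero hR hμ hHad (hν j).1 (hν' j).1 hj
      (hdual _)
  | succ n ih =>
    intro j hj
    rw [← (hν j).2, ← (hν' j).2]
    by_cases hj' : a j = a' j
    · rw [hj', fourierStieltjes_sigmaL_sub_sigmaL hR hμ,
        ih (j + 1) (by rwa [add_right_comm, add_assoc]), mul_zero]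
    · exact fourierStieltjes_sigmaL_sub_sigmaL_eq_zero hR hμ hHad (hν j).1 (hν' j).1 hj'
        (hdual _)

lemma IsBackwardOrbit.sub_eq_pow_mulVec {ν ν' : ℕ → Fin d → ℝ} {a : ℕ → Fin d → ℤ}
    (hν : IsBackwardOrbit R L ν a) (hν' : IsBackwardOrbit R L ν' a) (k m : ℕ) :
    ν' k - ν k = (Rmat R)ᵀ ^ m *ᵥ (ν' (k + m) - ν (k + m)) := by
  induction m with
  | zero => simp
  | succ m ih =>
    rw [ih, ← (hν (k + m)).2, ← (hν' (k + m)).2, sigmaL_sub_sigmaL, sub_self, add_zero,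
      Matrix.mulVec_mulVec, ← pow_succ, add_assoc]

/-- Otherwise `(Rᵀ)^q` would fix the nonzero difference of the tails. -/
lemma Expansive.eq_of_isBackwardOrbit (hR : Expansive R) {ν ν' : ℕ → Fin d → ℝ}
    {a : ℕ → Fin d → ℤ} (hν : IsBackwardOrbit R L ν a) (hν' : IsBackwardOrbit R L ν' a)
    {q K : ℕ} (hq : 0 < q) (hper : ∀ k ≥ K, ν (k + q) = ν k)
    (hper' : ∀ k ≥ K, ν' (k + q) = ν' k) {k : ℕ} (hk : K ≤ k) : ν k = ν' k := by
  have hfix := hν.sub_eq_pow_mulVec hν' k q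
  rw [hper k hk, hper' k hk] at hfix
  exact (sub_eq_zero.mp (hR.eq_zero_of_pow_mulVec_eq_self hq hfix.symm)).symm

end Orthogonality

section Cycles

variable {d : ℕ} {R : Matrix (Fin d) (Fin d) ℤ} {B L : Finset (Fin d → ℤ)}
  {p : ℕ} {x : Fin (p + 1) → Fin d → ℝ} {l : Fin (p + 1) → Fin d → ℤ}

lemma sigmaL_neg_of_transpose_mulVec {y z : Fin d → ℝ} {a : Fin d → ℤ}
    (h : (Rmat R)ᵀ *ᵥ y = z + vecR a) : sigmaL R a (-y) = -z := by
  rw [sigmaL, Matrix.mulVec_neg, h]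
  abel

lemma lambdaC_subset_orbitDual (hB0 : (0 : Fin d → ℤ) ∈ B)
    (hcyc : ∀ i, (Rmat R)ᵀ *ᵥ x (i + 1) = x i + vecR (l i)) (hext : BExtreme B (Set.range x)) :
    LambdaC R L (Set.range x) ⊆ orbitDual R B := by
  refine lambdaC_subset ?_ fun l _ _ hy => sigmaL_mem_orbitDual l hy
  rintro _ ⟨i, rfl⟩
  exact neg_mem (mem_orbitDual_of_cycle hcyc
    (fun j => mem_digitDual_of_norm_chiB hB0 (hext _ ⟨j, rfl⟩)) i)

variable {ν : ℕ → Fin d → ℝ} {K : ℕ} {i₀ : Fin (p + 1)}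

lemma tail_periodic (h : ∀ k ≥ K, ν k = -x (i₀ + k)) {q : ℕ} (hq : p + 1 ∣ q) {k : ℕ}
    (hk : K ≤ k) : ν (k + q) = ν k := by
  rw [h k hk, h (k + q) (by omega), Nat.cast_add, Fin.natCast_eq_zero.2 hq, add_zero]

lemma exists_tail_eq (h : ∀ k ≥ K, ν k = -x (i₀ + k)) (i : Fin (p + 1)) (M : ℕ) :
    ∃ k ≥ M, ν k = -x i := by
  refine ⟨max M K + (i - i₀ - (max M K : ℕ)).val, by omega, ?_⟩
  rw [h _ (by omega), Nat.cast_add, Fin.cast_val_eq_self]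
  ring_nf

lemma range_subset_of_tail_eq {p' : ℕ} {x' : Fin (p' + 1) → Fin d → ℝ} {ν' : ℕ → Fin d → ℝ}
    {K' M : ℕ} {i₀' : Fin (p' + 1)} (h : ∀ k ≥ K, ν k = -x (i₀ + k))
    (h' : ∀ k ≥ K', ν' k = -x' (i₀' + k)) (heq : ∀ k ≥ M, ν k = ν' k) :
    Set.range x ⊆ Set.range x' := by
  rintro _ ⟨i, rfl⟩
  obtain ⟨k, hk, hνk⟩ := exists_tail_eq h i (max M K')
  exact ⟨i₀' + k, by rw [← neg_inj, ← h' k (by omega), ← heq k (by omega), hνk]⟩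

end Cycles

theorem fourierStieltjes_sub_eq_zero {d : ℕ} {R : Matrix (Fin d) (Fin d) ℤ}
    {B L : Finset (Fin d → ℤ)} {μ : Measure (Fin d → ℝ)} [IsFiniteMeasure μ]
    (hR : Expansive R) (hB0 : (0 : Fin d → ℤ) ∈ B)
    (hμ : μ = (B.card : ℝ≥0∞)⁻¹ • ∑ b ∈ B, μ.map (tauB R b)) (hHad : IsHadamardPair R B L)
    {C₁ C₂ : Set (Fin d → ℝ)} (hC₁ : IsLCycle R L C₁) (hC₁ext : BExtreme B C₁)
    (hC₂ : IsLCycle R L C₂) (hC₂ext : BExtreme B C₂) (hne : C₁ ≠ C₂)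
    {lam₁ lam₂ : Fin d → ℝ} (h₁ : lam₁ ∈ LambdaC R L C₁) (h₂ : lam₂ ∈ LambdaC R L C₂) :
    fourierStieltjes μ (lam₂ - lam₁) = 0 := by
  have hdet := hR.det_Rmat_ne_zero
  obtain ⟨p₁, x₁, l₁, hl₁, hx₁, rfl⟩ := hC₁.exists_transpose_mulVec hdet
  obtain ⟨p₂, x₂, l₂, hl₂, hx₂, rfl⟩ := hC₂.exists_transpose_mulVec hdet
  obtain ⟨ν₁, a₁, rfl, hν₁, hν₁Λ, K₁, i₁, hK₁⟩ :=
    exists_backwardOrbit hl₁ (fun i => sigmaL_neg_of_transpose_mulVec (hx₁ i)) h₁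
  obtain ⟨ν₂, a₂, rfl, hν₂, hν₂Λ, K₂, i₂, hK₂⟩ :=
    exists_backwardOrbit hl₂ (fun i => sigmaL_neg_of_transpose_mulVec (hx₂ i)) h₂
  have hdual (k : ℕ) : ν₂ k - ν₁ k ∈ digitDual B := by
    simpa using mem_orbitDual_iff.1 (sub_mem (lambdaC_subset_orbitDual hB0 hx₂ hC₂ext (hν₂Λ k))
      (lambdaC_subset_orbitDual hB0 hx₁ hC₁ext (hν₁Λ k))) 0
  by_cases hdig : ∃ k, a₁ k ≠ a₂ k
  · obtain ⟨k, hk⟩ := hdig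
    exact fourierStieltjes_sub_eq_zero_of_digit_ne hdet hμ hHad hν₁ hν₂ hdual hk
  · obtain rfl : a₁ = a₂ := funext fun k => not_not.1 fun hk => hdig ⟨k, hk⟩
    have heq (k : ℕ) (hk : max K₁ K₂ ≤ k) : ν₁ k = ν₂ k :=
      hR.eq_of_isBackwardOrbit hν₁ hν₂ (q := (p₁ + 1) * (p₂ + 1)) (by positivity)
        (fun j hj => tail_periodic hK₁ (dvd_mul_right _ _) (by omega))
        (fun j hj => tail_periodic hK₂ (dvd_mul_left _ _) (by omega)) hk
    exact absurd ((range_subset_of_tail_eq hK₁ hK₂ heq).antisymm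
      (range_subset_of_tail_eq hK₂ hK₁ fun k hk => (heq k hk).symm)) hne

theorem stmt11_general
    (d N : ℕ) (R : Matrix (Fin d) (Fin d) ℤ) (hRexp : Expansive R)
    (B : Finset (Fin d → ℤ)) (hB0 : (0 : Fin d → ℤ) ∈ B) (hBcard : B.card = N)
    (μ : Measure (Fin d → ℝ)) [IsProbabilityMeasure μ]
    (hμinv : μ = (N : ENNReal)⁻¹ • ∑ b ∈ B, μ.map (tauB R b))
    (L : Finset (Fin d → ℤ))
    (hHad : IsHadamardPair R B L)
    (E : (Fin d → ℝ) → Lp ℂ 2 μ)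
    (hE : ∀ t : Fin d → ℝ, (E t : (Fin d → ℝ) → ℂ) =ᵐ[μ] fun x => expv t x)
    (C₁ C₂ : Set (Fin d → ℝ))
    (hC₁ : IsLCycle R L C₁) (hC₁ext : BExtreme B C₁)
    (hC₂ : IsLCycle R L C₂) (hC₂ext : BExtreme B C₂)
    (hne : C₁ ≠ C₂) :
    ∀ f ∈ HCyc E R L C₁, ∀ g ∈ HCyc E R L C₂, (inner ℂ f g : ℂ) = 0 := by
  intro f hf g hg
  refine Submodule.IsOrtho.inner_eq (Submodule.IsOrtho.topologicalClosure ?_) hf hg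
  rw [Submodule.isOrtho_span]
  rintro _ ⟨lam₁, h₁, rfl⟩ _ ⟨lam₂, h₂, rfl⟩
  rw [inner_eq_fourierStieltjes hE]
  exact fourierStieltjes_sub_eq_zero hRexp hB0 (hBcard ▸ hμinv) hHad hC₁ hC₁ext hC₂ hC₂ext hne
    h₁ h₂

theorem stmt11
    (d N : ℕ) (R : Matrix (Fin d) (Fin d) ℤ) (hRexp : Expansive R)
    (B : Finset (Fin d → ℤ)) (hB0 : (0 : Fin d → ℤ) ∈ B) (hBcard : B.card = N)
    (X : Set (Fin d → ℝ)) (hXc : IsCompact X) (hXne : X.Nonempty)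
    (hX : X = ⋃ b ∈ B, tauB R b '' X)
    (μ : Measure (Fin d → ℝ)) [IsProbabilityMeasure μ]
    (hμinv : μ = (N : ENNReal)⁻¹ • ∑ b ∈ B, μ.map (tauB R b))
    (hμsupp : μ Xᶜ = 0)
    (hnooverlap : ∀ b ∈ B, ∀ b' ∈ B, b ≠ b' →
      μ (tauB R b '' X ∩ tauB R b' '' X) = 0)
    (L : Finset (Fin d → ℤ)) (hL0 : (0 : Fin d → ℤ) ∈ L) (hLcard : L.card = N)
    (hHad : IsHadamardPair R B L)
    (hreg : ∃ v : Fin d → (Fin d → ℝ), (∀ i, v i ∈ GammaBSet R B) ∧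
      LinearIndependent ℝ v)
    (E : (Fin d → ℝ) → Lp ℂ 2 μ)
    (hE : ∀ t : Fin d → ℝ, (E t : (Fin d → ℝ) → ℂ) =ᵐ[μ] fun x => expv t x)
    (C₁ C₂ : Set (Fin d → ℝ))
    (hC₁ : IsLCycle R L C₁) (hC₁ext : BExtreme B C₁)
    (hC₂ : IsLCycle R L C₂) (hC₂ext : BExtreme B C₂)
    (hne : C₁ ≠ C₂) :
    ∀ f ∈ HCyc E R L C₁, ∀ g ∈ HCyc E R L C₂, (inner ℂ f g : ℂ) = 0 :=
  stmt11_general d N R hRexp B hB0 hBcard μ hμinv L hHad E hE C₁ C₂ hC₁ hC₁ext hC₂ hC₂ext hne
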